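/- For positive integers i < j and k ≥ 1, the cloning of the interval-reversal permutation r_{i,j} is given by: ς_k(r_{i,j}) = r_{i+1,j+1} if k < i; ς_k(r_{i,j}) = r_{i,j+1} ∘ r_{k,k+1} if i ≤ k ≤ j (where r_{k,k+1} is the transposition of k and k+1, and composition is (g∘h)(m) = g(h(m))); and ς_k(r_{i,j}) = r_{i,j} if k > j. -/

import Mathlib

/-!
Every map involved is piecewise affine in `m` with breakpoints among `i, j, k` and their
neighbours. Coercing to `ℕ` turns both `rrev` and `clone` into explicit `if`-expressions in
linear arithmetic (`natRrev`, `natClone`), where each of the three identities is a finite case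
split closed by `omega`.
-/

/-- The interval reversal `r_{i,j}` of the positive integers: `m ↦ i + j − m` for
`i ≤ m ≤ j`, identity otherwise. -/
def rrev (i j : ℕ+) : ℕ+ → ℕ+ := fun m =>
  if i ≤ m ∧ m ≤ j then i + j - m else m

/-- The `k`-th cloning map on maps of the positive integers:
`ς_k(g)(m) = g(m)` if `m ≤ k` and `g(m) ≤ g(k)`; `g(m)+1` if `m < k` and `g(m) > g(k)`;
`g(m−1)` if `m > k` and `g(m−1) < g(k)`; `g(m−1)+1` if `m > k` and `g(m−1) ≥ g(k)`. -/
def clone (k : ℕ+) (g : ℕ+ → ℕ+) : ℕ+ → ℕ+ := fun m =>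
  if m ≤ k then (if g m ≤ g k then g m else g m + 1)
  else (if g (m - 1) < g k then g (m - 1) else g (m - 1) + 1)

def natRrev (i j n : ℕ) : ℕ := if i ≤ n ∧ n ≤ j then i + j - n else n

def natClone (k : ℕ) (f : ℕ → ℕ) (n : ℕ) : ℕ :=
  if n ≤ k then (if f n ≤ f k then f n else f n + 1)
  else (if f (n - 1) < f k then f (n - 1) else f (n - 1) + 1)

lemma natClone_natRrev_of_lt_left {i j k : ℕ} (hk : k < i) (n : ℕ) :
    natClone k (natRrev i j) n = natRrev (i + 1) (j + 1) n := by
  unfold natClone natRrev; split_ifs <;> omega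

lemma natClone_natRrev_of_mem {i j k : ℕ} (hik : i ≤ k) (hkj : k ≤ j) (n : ℕ) :
    natClone k (natRrev i j) n = natRrev i (j + 1) (natRrev k (k + 1) n) := by
  unfold natClone natRrev; split_ifs <;> omega

lemma natClone_natRrev_of_right_lt {i j k : ℕ} (hjk : j < k) (n : ℕ) :
    natClone k (natRrev i j) n = natRrev i j n := by
  unfold natClone natRrev; split_ifs <;> omega

lemma PNat.coe_sub_one {m : ℕ+} (h : 1 < m) : ((m - 1 : ℕ+) : ℕ) = m - 1 := by
  rw [PNat.sub_coe, if_pos h, PNat.one_coe]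

lemma coe_rrev_apply (i j m : ℕ+) : (rrev i j m : ℕ) = natRrev i j m := by
  simp only [rrev, natRrev, PNat.coe_le_coe]
  split_ifs with h
  · have : m < i + j := h.2.trans_lt (PNat.lt_add_left j i)
    rw [PNat.sub_coe, if_pos this, PNat.add_coe]
  · rfl

lemma coe_clone_apply {g : ℕ+ → ℕ+} {f : ℕ → ℕ} (hgf : ∀ m, (g m : ℕ) = f m) (k m : ℕ+) :
    (clone k g m : ℕ) = natClone k f m := by
  unfold clone natClone
  by_cases hmk : m ≤ k
  · simp only [if_pos hmk, ← hgf, PNat.coe_le_coe]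
    split_ifs <;> rfl
  · have hm : 1 < m := one_le.trans_lt (not_le.mp hmk)
    simp only [if_neg hmk, PNat.coe_le_coe, ← PNat.coe_sub_one hm, ← hgf, PNat.coe_lt_coe]
    split_ifs <;> rfl

lemma coe_clone_rrev_apply (i j k m : ℕ+) :
    (clone k (rrev i j) m : ℕ) = natClone k (natRrev i j) m :=
  coe_clone_apply (coe_rrev_apply i j) k m

theorem clone_rrev_general (i j k : ℕ+) :
    (k < i → clone k (rrev i j) = rrev (i + 1) (j + 1)) ∧
    (i ≤ k → k ≤ j → clone k (rrev i j) = rrev i (j + 1) ∘ rrev k (k + 1)) ∧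
    (j < k → clone k (rrev i j) = rrev i j) := by
  refine ⟨fun hki => ?_, fun hik hkj => ?_, fun hjk => ?_⟩ <;> funext m <;>
    apply PNat.coe_injective <;>
    simp only [coe_clone_rrev_apply, Function.comp_apply, coe_rrev_apply, PNat.add_coe, PNat.one_coe]
  · exact natClone_natRrev_of_lt_left (mod_cast hki) m
  · exact natClone_natRrev_of_mem (mod_cast hik) (mod_cast hkj) m
  · exact natClone_natRrev_of_right_lt (mod_cast hjk) m

/-- cloning of an interval reversal:
`ς_k(r_{i,j}) = r_{i+1,j+1}` for `k < i`; `ς_k(r_{i,j}) = r_{i,j+1} ∘ r_{k,k+1}` for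
`i ≤ k ≤ j`; and `ς_k(r_{i,j}) = r_{i,j}` for `k > j`. -/
theorem clone_rrev (i j k : ℕ+) (hij : i < j) :
    (k < i → clone k (rrev i j) = rrev (i + 1) (j + 1)) ∧
    (i ≤ k → k ≤ j → clone k (rrev i j) = rrev i (j + 1) ∘ rrev k (k + 1)) ∧
    (j < k → clone k (rrev i j) = rrev i j) :=
  clone_rrev_general i j k
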